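/- A graph M is strong 2-chromatic-choosable if and only if M is isomorphic to K_2, and M is strong 3-chromatic-choosable if and only if M is an odd cycle. -/

import Mathlib

open SimpleGraph

/-- A proper coloring of `G` from the list assignment `L`. -/
def IsProperListColoring {V : Type*} (G : SimpleGraph V) (L : V → Finset ℕ) (f : V → ℕ) : Prop :=
  (∀ v, f v ∈ L v) ∧ ∀ ⦃v w⦄, G.Adj v w → f v ≠ f w

/-- `G` is `k`-choosable: every `k`-assignment admits a proper coloring. -/
def Choosable {V : Type*} (G : SimpleGraph V) (k : ℕ) : Prop :=
  ∀ L : V → Finset ℕ, (∀ v, (L v).card = k) → ∃ f, IsProperListColoring G L f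

/-- The list chromatic number: the least `k` such that `G` is `k`-choosable. -/
noncomputable def listChromaticNumber {V : Type*} (G : SimpleGraph V) : ℕ :=
  sInf {k | Choosable G k}

/-- The list color function `P_ℓ(G,k)`: the minimum number of proper `L`-colorings
over all `k`-assignments `L`. -/
noncomputable def listColorFunction {V : Type*} (G : SimpleGraph V) (k : ℕ) : ℕ :=
  sInf {n | ∃ L : V → Finset ℕ, (∀ v, (L v).card = k) ∧
    n = Nat.card {f : V → ℕ // IsProperListColoring G L f}}

/-- `G` is strong `k`-chromatic-choosable: `χ(G) = k` and every `(k-1)`-assignment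
admitting no proper coloring is constant. -/
def StrongChromChoosable {V : Type*} (G : SimpleGraph V) (k : ℕ) : Prop :=
  G.chromaticNumber = k ∧
  ∀ L : V → Finset ℕ, (∀ v, (L v).card = k - 1) →
    (¬ ∃ f, IsProperListColoring G L f) → ∀ v w, L v = L w

/-!
If `G` is strong `k`-chromatic-choosable (`k ≥ 2`) and `H` with `χ(H) = k` maps homomorphically
into `G`, the map is onto: the lists `{0, …, k-2}` on its image and a disjoint list elsewhere form a
non-constant `(k-1)`-assignment with no proper colouring. For `k = 2` take `H` an edge; for `k = 3`
take a shortest odd closed walk, which is an induced odd cycle since a repeated vertex or a chord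
would split it into two shorter closed walks, one of them odd.

Conversely, a `1`-assignment of `K₂` without a colouring gives both ends the same list, and a
`2`-assignment of a cycle whose lists differ at consecutive vertices `i`, `i + 1` is coloured
greedily from `i + 1` onwards, starting with a colour missing from the list of `i`.
-/

section

variable {V W : Type*} {G : SimpleGraph V} {H : SimpleGraph W}

lemma IsProperListColoring.comp {L : W → Finset ℕ} {f : W → ℕ}
    (hf : IsProperListColoring H L f) (φ : G →g H) :
    IsProperListColoring G (L ∘ φ) (f ∘ φ) :=
  ⟨fun v => hf.1 (φ v), fun _ _ h => hf.2 (φ.map_adj h)⟩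

lemma IsProperListColoring.colorable {L : V → Finset ℕ} {f : V → ℕ} {m : ℕ}
    (hf : IsProperListColoring G L f) (hL : ∀ v, L v ⊆ Finset.range m) : G.Colorable m :=
  ⟨Coloring.mk (fun v => ⟨f v, Finset.mem_range.mp (hL v (hf.1 v))⟩)
    fun h heq => hf.2 h (congrArg Fin.val heq)⟩

lemma exists_adj_eq_of_card_eq_one {L : V → Finset ℕ} (hL : ∀ v, (L v).card = 1)
    (h : ¬ ∃ f, IsProperListColoring G L f) : ∃ v w, G.Adj v w ∧ L v = L w := by
  choose c hc using fun v => Finset.card_eq_one.mp (hL v)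
  by_contra hne
  push Not at hne
  exact h ⟨c, fun v => by simp [hc v], fun v w hvw hcvw => hne v w hvw (by rw [hc, hc, hcvw])⟩

lemma not_colorable_of_chromaticNumber_eq {k : ℕ} (h : G.chromaticNumber = k) (hk : k ≠ 0) :
    ¬ G.Colorable (k - 1) := by
  intro hc
  have := hc.chromaticNumber_le
  rw [h] at this
  norm_cast at this
  omega

namespace StrongChromChoosable

lemma of_iso {k : ℕ} (h : StrongChromChoosable H k) (e : G ≃g H) : StrongChromChoosable G k := by
  refine ⟨(chromaticNumber_congr e).trans h.1, fun L hL hno v w => ?_⟩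
  have hno' : ¬ ∃ f, IsProperListColoring H (L ∘ e.symm) f := fun ⟨f, hf⟩ =>
    hno ⟨f ∘ e, by simpa [Function.comp_def] using hf.comp e.toHom⟩
  simpa using h.2 (L ∘ e.symm) (fun _ => hL _) hno' (e v) (e w)

lemma surjective_of_hom {k : ℕ} (hG : StrongChromChoosable G k) (hk : 2 ≤ k) (φ : H →g G)
    (hH : H.chromaticNumber = k) : Function.Surjective φ := by
  classical
  have hH' := not_colorable_of_chromaticNumber_eq hH (by omega)
  obtain ⟨y⟩ : Nonempty W := by
    by_contra hW
    rw [not_nonempty_iff] at hW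
    exact hH' (Colorable.of_isEmpty _)
  intro x
  by_contra hx
  let L : V → Finset ℕ := fun v =>
    if ∃ w, φ w = v then Finset.range (k - 1) else Finset.Ico (k - 1) (2 * (k - 1))
  have hL : ∀ v, (L v).card = k - 1 := fun v => by
    simp only [L]
    split_ifs
    · exact Finset.card_range _
    · rw [Nat.card_Ico]; omega
  have hno : ¬ ∃ f, IsProperListColoring G L f := fun ⟨f, hf⟩ =>
    hH' <| (hf.comp φ).colorable fun w => by simp [L]
  have hLx : L x = Finset.Ico (k - 1) (2 * (k - 1)) := if_neg hx
  have hLy : L (φ y) = Finset.range (k - 1) := if_pos ⟨y, rfl⟩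
  have h0 : 0 ∈ L x := by
    rw [hG.2 L hL hno x (φ y), hLy, Finset.mem_range]
    omega
  rw [hLx, Finset.mem_Ico] at h0
  omega

lemma nonempty_iso_of_embedding {k : ℕ} (hG : StrongChromChoosable G k) (hk : 2 ≤ k)
    (f : H ↪g G) (hH : H.chromaticNumber = k) : Nonempty (G ≃g H) :=
  ⟨(RelIso.ofSurjective f (hG.surjective_of_hom hk f.toHom hH)).symm⟩

end StrongChromChoosable

theorem strongChromChoosable_top_fin_two : StrongChromChoosable (⊤ : SimpleGraph (Fin 2)) 2 := by
  refine ⟨by simp [chromaticNumber_top], fun L hL hno => ?_⟩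
  obtain ⟨a, b, hab, hLab⟩ := exists_adj_eq_of_card_eq_one hL hno
  have hLa : ∀ x, L x = L a := fun x => by
    rcases (by have := hab.ne; fin_omega : x = a ∨ x = b) with rfl | rfl
    · rfl
    · exact hLab.symm
  intro v w
  rw [hLa v, hLa w]

lemma exists_seq_mem_ne {α : Type*} {L : ℕ → Finset α} (hL : ∀ k, 1 < (L k).card) {c : α}
    (hc : c ∈ L 0) : ∃ g : ℕ → α, g 0 = c ∧ (∀ k, g k ∈ L k) ∧ ∀ k, g (k + 1) ≠ g k := by
  choose next hmem hne using fun k (a : α) => Finset.exists_mem_ne (hL (k + 1)) a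
  let g : ℕ → α := fun k => Nat.rec c (fun k a => next k a) k
  refine ⟨g, rfl, fun k => ?_, fun k => hne k (g k)⟩
  cases k with
  | zero => exact hc
  | succ k => exact hmem k (g k)

lemma cycleGraph_adj_iff_of_lt {n : ℕ} {a b : Fin n} (hab : a < b) :
    (cycleGraph n).Adj a b ↔ b.val = a.val + 1 ∨ (a.val = 0 ∧ b.val = n - 1) := by
  rw [cycleGraph_adj', Fin.coe_sub_iff_lt.mpr hab, Fin.coe_sub_iff_le.mpr hab.le]
  omega

lemma Fin.eq_add_one_of_val_sub_eq_one {n : ℕ} {a b : Fin (n + 1)} (h : (a - b).val = 1) :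
    a = b + 1 := by
  have hn : 1 < n + 1 := by simpa [h] using (a - b).isLt
  have h1 : a - b = 1 := Fin.ext (by rw [h, Fin.val_one', Nat.mod_eq_of_lt hn])
  rw [sub_eq_iff_eq_add] at h1
  exact h1.trans (add_comm _ _)

open Fin.NatCast in
lemma exists_isProperListColoring_cycleGraph_of_ne {n : ℕ} (L : Fin (n + 1) → Finset ℕ)
    (hL : ∀ i, (L i).card = 2) {i : Fin (n + 1)} (hi : L i ≠ L (i + 1)) :
    ∃ f, IsProperListColoring (cycleGraph (n + 1)) L f := by
  obtain ⟨c, hcs, hci⟩ : ∃ c ∈ L (i + 1), c ∉ L i := Finset.not_subset.mp fun hsub =>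
    hi (Finset.eq_of_subset_of_card_le hsub (by rw [hL, hL])).symm
  obtain ⟨g, hg0, hgL, hgne⟩ := exists_seq_mem_ne (L := fun k : ℕ => L (i + 1 + k))
    (fun k => by rw [hL]; norm_num) (by simpa using hcs)
  let f : Fin (n + 1) → ℕ := fun j => g (j - (i + 1)).val
  have hfL : ∀ j, f j ∈ L j := fun j => by simpa using hgL (j - (i + 1)).val
  have hf_succ : ∀ j, f (j + 1) ≠ f j := fun j => by
    have hshift : j + 1 - (i + 1) = j - (i + 1) + 1 := by abel
    by_cases ht : j - (i + 1) = Fin.last n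
    · have hj : j = i := by
        rw [ht, Fin.last_add_one, sub_eq_zero] at hshift
        exact add_right_cancel hshift
      have hfj : f (j + 1) = c := by
        simp only [f, hshift, ht, Fin.last_add_one, Fin.val_zero, hg0]
      rw [hfj]
      exact fun hcf => hci (hj ▸ hcf ▸ hfL j)
    · simp only [f, hshift, Fin.val_add_one, if_neg ht]
      exact hgne _
  refine ⟨f, hfL, fun a b hab => ?_⟩
  rcases cycleGraph_adj'.mp hab with h | h
  · exact Fin.eq_add_one_of_val_sub_eq_one h ▸ hf_succ b
  · exact (Fin.eq_add_one_of_val_sub_eq_one h ▸ hf_succ a).symm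

theorem strongChromChoosable_cycleGraph_two_mul_add_one {l : ℕ} (hl : 1 ≤ l) :
    StrongChromChoosable (cycleGraph (2 * l + 1)) 3 := by
  refine ⟨chromaticNumber_cycleGraph_of_odd _ (by omega) (odd_two_mul_add_one l),
    fun L hL hno => ?_⟩
  have hsucc : ∀ i, L (i + 1) = L i := fun i => by
    by_contra h
    exact hno (exists_isProperListColoring_cycleGraph_of_ne L hL (Ne.symm h))
  have hconst : ∀ i, L i = L 0 :=
    Fin.induction rfl fun i hi => by rw [← Fin.coeSucc_eq_succ, hsucc, hi]
  intro v w
  rw [hconst v, hconst w]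

namespace SimpleGraph.Walk

def IsShortestOddLoop {u : V} (p : G.Walk u u) : Prop :=
  Odd p.length ∧ ∀ v (c : G.Walk v v), Odd c.length → p.length ≤ c.length

lemma exists_isShortestOddLoop (h : ¬ G.Colorable 2) :
    ∃ u, ∃ p : G.Walk u u, p.IsShortestOddLoop := by
  classical
  have hex : ∃ n, ∃ u, ∃ p : G.Walk u u, Odd p.length ∧ p.length = n := by
    rw [two_colorable_iff_forall_loop_even] at h
    push Not at h
    obtain ⟨u, p, hp⟩ := h
    exact ⟨_, u, p, Nat.not_even_iff_odd.mp hp, rfl⟩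
  obtain ⟨u, p, hodd, hlen⟩ := Nat.find_spec hex
  exact ⟨u, p, hodd, fun v c hc => hlen ▸ Nat.find_min' hex ⟨v, c, hc, rfl⟩⟩

lemma exists_walk_getVert_getVert {u v : V} (p : G.Walk u v) {i j : ℕ} (hij : i ≤ j)
    (hj : j ≤ p.length) : ∃ q : G.Walk (p.getVert i) (p.getVert j), q.length = j - i :=
  ⟨((p.drop i).take (j - i)).copy rfl (by rw [drop_getVert, Nat.add_sub_cancel' hij]),
    by simp only [length_copy, take_length, drop_length]; omega⟩

namespace IsShortestOddLoop

variable {u : V} {p : G.Walk u u}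

/-- `q` closes either arc of `p` between positions `i` and `j` into a closed walk; the two
lengths add up to `p.length + 2 * q.length`, so one of them is odd. -/
lemma length_le_arc_add_length (hp : p.IsShortestOddLoop) {i j : ℕ} (hij : i ≤ j)
    (hj : j ≤ p.length) (q : G.Walk (p.getVert j) (p.getVert i)) :
    p.length ≤ j - i + q.length ∨ p.length ≤ p.length - (j - i) + q.length := by
  obtain ⟨r, hr⟩ := exists_walk_getVert_getVert p hij hj
  let c := ((p.drop j).append (p.take i)).append q.reverse
  have hc : c.length = p.length - (j - i) + q.length := by
    simp only [c, length_append, drop_length, take_length, length_reverse]; omega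
  rcases Nat.even_or_odd (j - i + q.length) with he | ho
  · right
    have hsum : p.length - (j - i) + q.length + (j - i + q.length) = p.length + 2 * q.length := by
      omega
    have hodd : Odd c.length := by
      rw [hc]
      have := hsum ▸ hp.1.add_even (even_two_mul q.length)
      exact (Nat.odd_add.mp this).mpr he
    exact hc ▸ hp.2 _ c hodd
  · left
    have hlen : (r.append q).length = j - i + q.length := by rw [length_append, hr]
    exact hlen ▸ hp.2 _ (r.append q) (hlen ▸ ho)

lemma getVert_ne (hp : p.IsShortestOddLoop) {i j : ℕ} (hij : i < j) (hj : j < p.length) :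
    p.getVert i ≠ p.getVert j := by
  intro h
  have := hp.length_le_arc_add_length hij.le hj.le (nil.copy h rfl)
  simp only [length_copy, length_nil, add_zero] at this
  omega

lemma adj_getVert_iff (hp : p.IsShortestOddLoop) {i j : ℕ} (hij : i < j) (hj : j < p.length) :
    G.Adj (p.getVert i) (p.getVert j) ↔ j = i + 1 ∨ (i = 0 ∧ j = p.length - 1) := by
  constructor
  · intro h
    have := hp.length_le_arc_add_length hij.le hj.le h.symm.toWalk
    rw [Adj.length_toWalk] at this
    omega
  · rintro (rfl | ⟨rfl, rfl⟩)
    · exact p.adj_getVert_succ (by omega)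
    · have h := p.adj_getVert_succ (i := p.length - 1) (by omega)
      rw [Nat.sub_add_cancel (by omega), getVert_length] at h
      rw [getVert_zero]
      exact h.symm

lemma three_le_length (hp : p.IsShortestOddLoop) : 3 ≤ p.length := by
  obtain ⟨k, hk⟩ := hp.1
  rcases k with _ | k
  · have h := p.adj_getVert_succ (i := 0) (by omega)
    rw [zero_add, show 1 = p.length by omega, getVert_length, getVert_zero] at h
    exact absurd h (G.irrefl)
  · omega

lemma injective_getVert (hp : p.IsShortestOddLoop) :
    Function.Injective fun k : Fin p.length => p.getVert k := by
  intro a b h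
  by_contra hab
  rcases Fin.lt_or_lt_of_ne hab with hlt | hlt
  · exact hp.getVert_ne hlt b.2 h
  · exact hp.getVert_ne hlt a.2 h.symm

def cycleEmbedding (hp : p.IsShortestOddLoop) : cycleGraph p.length ↪g G where
  toFun k := p.getVert k
  inj' := hp.injective_getVert
  map_rel_iff' {a b} := by
    change G.Adj (p.getVert a) (p.getVert b) ↔ _
    rcases lt_trichotomy a b with hlt | rfl | hlt
    · rw [hp.adj_getVert_iff hlt b.2, cycleGraph_adj_iff_of_lt hlt]
    · simp
    · rw [adj_comm, (cycleGraph _).adj_comm, hp.adj_getVert_iff hlt a.2,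
        cycleGraph_adj_iff_of_lt hlt]

end IsShortestOddLoop

end SimpleGraph.Walk

theorem exists_odd_cycleGraph_embedding_of_not_colorable_two (h : ¬ G.Colorable 2) :
    ∃ n, Odd n ∧ 3 ≤ n ∧ Nonempty (cycleGraph n ↪g G) := by
  obtain ⟨u, p, hp⟩ := Walk.exists_isShortestOddLoop h
  exact ⟨p.length, hp.1, hp.three_le_length, ⟨hp.cycleEmbedding⟩⟩

end

theorem strongChromChoosable_two_three_iff_general {V : Type*} (M : SimpleGraph V) :
    (StrongChromChoosable M 2 ↔ Nonempty (M ≃g (⊤ : SimpleGraph (Fin 2)))) ∧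
    (StrongChromChoosable M 3 ↔ ∃ l : ℕ, 1 ≤ l ∧ Nonempty (M ≃g cycleGraph (2 * l + 1))) := by
  refine ⟨⟨fun h => ?_, fun ⟨e⟩ => strongChromChoosable_top_fin_two.of_iso e⟩, ⟨fun h => ?_,
    fun ⟨l, hl, ⟨e⟩⟩ => (strongChromChoosable_cycleGraph_two_mul_add_one hl).of_iso e⟩⟩
  · have hM : ¬ M.CliqueFree 2 := by
      rw [cliqueFree_two, ← colorable_one_iff]
      exact not_colorable_of_chromaticNumber_eq h.1 two_ne_zero
    exact h.nonempty_iso_of_embedding le_rfl (topEmbeddingOfNotCliqueFree hM)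
      strongChromChoosable_top_fin_two.1
  · obtain ⟨n, ⟨l, rfl⟩, hn, ⟨f⟩⟩ :=
      exists_odd_cycleGraph_embedding_of_not_colorable_two
        (not_colorable_of_chromaticNumber_eq h.1 three_ne_zero)
    exact ⟨l, by omega, h.nonempty_iso_of_embedding (by norm_num) f
      (chromaticNumber_cycleGraph_of_odd _ (by omega) (odd_two_mul_add_one l))⟩

theorem strongChromChoosable_two_three_iff {V : Type*} [Fintype V] [Nonempty V]
    (M : SimpleGraph V) :
    (StrongChromChoosable M 2 ↔ Nonempty (M ≃g (⊤ : SimpleGraph (Fin 2)))) ∧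
    (StrongChromChoosable M 3 ↔ ∃ l : ℕ, 1 ≤ l ∧ Nonempty (M ≃g cycleGraph (2 * l + 1))) :=
  strongChromChoosable_two_three_iff_general M
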